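/- Let n ≥ 3, a > 0, and let u : B_{8a} → ℝ be a nonnegative C¹ function on the open ball B_{8a} ⊂ ℝⁿ centered at the origin. Suppose that for all x ∈ B_{4a}, all λ with 0 < λ < 2a, and all y ∈ B_{8a} with |y − x| > λ, one has (λ/|y−x|)^{n−2} u(x + λ²(y−x)/|y−x|²) ≤ u(y). Then |∇u(x)| ≤ ((n−2)/(2a)) u(x) for all x with |x| < a. -/

import Mathlib

/-!
Fix `x` with `|x| < a` and a unit vector `e` with `∂ₑu(x) = -|∇u(x)|`, and put `z = x - a e`,
so `|z| < 2a`. For `a < s < 4a` the sphere of radius `√(a s)` about `z` swaps `z + s e` and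
`x = z + a e`, so the hypothesis reads `a^{(n-2)/2} u(x) ≤ s^{(n-2)/2} u(z + s e)`. Hence
`s ↦ s^{(n-2)/2} u(z + s e)` has a one-sided minimum at `s = a`, and its derivative there,
`a^{(n-4)/2} ((n-2)/2 · u(x) - a |∇u(x)|)`, is nonnegative.
-/

open Set RealInnerProductSpace

lemma HasDerivAt.nonneg_of_forall_Ioo_le {φ : ℝ → ℝ} {D a b : ℝ} (hφ : HasDerivAt φ D a)
    (hab : a < b) (hmin : ∀ s ∈ Ioo a b, φ a ≤ φ s) : 0 ≤ D := by
  have hloc : IsLocalMinOn φ (Ici a) a := by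
    filter_upwards [Ico_mem_nhdsGE hab] with s hs
    rcases hs.1.eq_or_lt with rfl | has
    · exact le_rfl
    · exact hmin s ⟨has, hs.2⟩
  have hone : (1 : ℝ) ∈ posTangentConeAt (Ici a) a :=
    mem_posTangentConeAt_of_segment_subset
      ((segment_subset_Icc (by linarith)).trans Icc_subset_Ici_self)
  simpa using hloc.hasFDerivWithinAt_nonneg hφ.hasDerivWithinAt.hasFDerivWithinAt hone

section Ray

variable {E : Type*} [NormedAddCommGroup E] [NormedSpace ℝ E]

lemma nonneg_mul_add_mul_fderiv_of_rpow_mul_le {f : E → ℝ} {z e : E} {p a b : ℝ}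
    (ha : 0 < a) (hab : a < b) (hf : DifferentiableAt ℝ f (z + a • e))
    (hray : ∀ s ∈ Ioo a b, a ^ p * f (z + a • e) ≤ s ^ p * f (z + s • e)) :
    0 ≤ p * f (z + a • e) + a * fderiv ℝ f (z + a • e) e := by
  have hline : HasDerivAt (fun s : ℝ => z + s • e) e a := by
    simpa using ((hasDerivAt_id a).smul_const e).const_add z
  have hφ := (Real.hasDerivAt_rpow_const (p := p) (Or.inl ha.ne')).mul
    (hf.hasFDerivAt.comp_hasDerivAt a hline)
  have hD := hφ.nonneg_of_forall_Ioo_le hab hray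
  simp only [Function.comp_apply] at hD
  have hfactor : p * a ^ (p - 1) * f (z + a • e) + a ^ p * fderiv ℝ f (z + a • e) e
      = a ^ (p - 1) * (p * f (z + a • e) + a * fderiv ℝ f (z + a • e) e) := by
    rw [Real.rpow_sub_one ha.ne']
    field_simp
  rw [hfactor] at hD
  exact nonneg_of_mul_nonneg_right hD (Real.rpow_pos_of_pos ha _)

lemma norm_add_smul_sub_self {z e : E} (he : ‖e‖ = 1) {s : ℝ} (hs : 0 ≤ s) :
    ‖z + s • e - z‖ = s := by
  rw [add_sub_cancel_left, norm_smul, he, mul_one, Real.norm_of_nonneg hs]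

lemma sqrt_mul_div_pow_mul_rpow {a s : ℝ} (ha : 0 ≤ a) (hs : 0 < s) (m : ℕ) :
    (√(a * s) / s) ^ m * s ^ ((m : ℝ) / 2) = a ^ ((m : ℝ) / 2) := by
  rw [Real.rpow_div_two_eq_sqrt _ ha, Real.rpow_div_two_eq_sqrt _ hs.le, Real.rpow_natCast,
    Real.rpow_natCast, ← mul_pow, Real.sqrt_mul ha, mul_div_assoc, mul_assoc, div_mul_eq_mul_div,
    Real.mul_self_sqrt hs.le, div_self hs.ne', mul_one]

lemma rpow_mul_le_of_kelvin {u : E → ℝ} {z e : E} (he : ‖e‖ = 1) {a s : ℝ} (ha : 0 < a)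
    (has : a < s) (m : ℕ)
    (hk : (√(a * s) / ‖z + s • e - z‖) ^ m *
      u (z + (√(a * s) ^ 2 / ‖z + s • e - z‖ ^ 2) • (z + s • e - z)) ≤ u (z + s • e)) :
    a ^ ((m : ℝ) / 2) * u (z + a • e) ≤ s ^ ((m : ℝ) / 2) * u (z + s • e) := by
  have hs : 0 < s := ha.trans has
  have hpoint : (√(a * s) ^ 2 / s ^ 2) • s • e = a • e := by
    rw [smul_smul, Real.sq_sqrt (by positivity)]
    congr 1
    field_simp
  rw [norm_add_smul_sub_self he hs.le, add_sub_cancel_left, hpoint] at hk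
  calc a ^ ((m : ℝ) / 2) * u (z + a • e)
      = s ^ ((m : ℝ) / 2) * ((√(a * s) / s) ^ m * u (z + a • e)) := by
        rw [← sqrt_mul_div_pow_mul_rpow ha.le hs m]; ring
    _ ≤ s ^ ((m : ℝ) / 2) * u (z + s • e) := by gcongr

end Ray

lemma exists_norm_eq_one_inner_eq_neg_norm {F : Type*} [NormedAddCommGroup F]
    [InnerProductSpace ℝ F] [Nontrivial F] (g : F) : ∃ e : F, ‖e‖ = 1 ∧ ⟪g, e⟫ = -‖g‖ := by
  rcases eq_or_ne g 0 with rfl | hg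
  · obtain ⟨e, he⟩ := exists_norm_eq F zero_le_one
    exact ⟨e, he, by simp⟩
  · refine ⟨-(‖g‖⁻¹ • g), ?_, ?_⟩
    · rw [norm_neg, norm_smul, norm_inv, norm_norm, inv_mul_cancel₀ (norm_ne_zero_iff.mpr hg)]
    · rw [inner_neg_right, real_inner_smul_right, real_inner_self_eq_norm_mul_norm,
        inv_mul_cancel_left₀ (norm_ne_zero_iff.mpr hg)]

theorem calculus_lemma_general (n : ℕ) (hn : 3 ≤ n) (a : ℝ) (ha : 0 < a)
    (u : EuclideanSpace ℝ (Fin n) → ℝ)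
    (hreg : ContDiffOn ℝ 1 u (Metric.ball (0 : EuclideanSpace ℝ (Fin n)) (8 * a)))
    (hkelvin : ∀ x ∈ Metric.ball (0 : EuclideanSpace ℝ (Fin n)) (4 * a),
      ∀ lam : ℝ, 0 < lam → lam < 2 * a →
      ∀ y ∈ Metric.ball (0 : EuclideanSpace ℝ (Fin n)) (8 * a), lam < ‖y - x‖ →
        (lam / ‖y - x‖) ^ (n - 2) * u (x + (lam ^ 2 / ‖y - x‖ ^ 2) • (y - x)) ≤ u y) :
    ∀ x : EuclideanSpace ℝ (Fin n), ‖x‖ < a →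
      ‖gradient u x‖ ≤ ((n : ℝ) - 2) / (2 * a) * u x := by
  intro x hx
  have : NeZero n := ⟨by omega⟩
  obtain ⟨e, he, hgrad⟩ := exists_norm_eq_one_inner_eq_neg_norm (gradient u x)
  set z := x - a • e
  have hzx : z + a • e = x := sub_add_cancel x (a • e)
  have hz : ‖z‖ < 2 * a := by
    calc ‖z‖ ≤ ‖x‖ + ‖a • e‖ := norm_sub_le x (a • e)
      _ < 2 * a := by rw [norm_smul, he, Real.norm_of_nonneg ha.le]; linarith
  have hray : ∀ s ∈ Ioo a (4 * a),
      a ^ ((n - 2 : ℕ) / 2 : ℝ) * u (z + a • e) ≤ s ^ ((n - 2 : ℕ) / 2 : ℝ) * u (z + s • e) := by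
    rintro s ⟨has, hs4⟩
    have hs : 0 < s := ha.trans has
    refine rpow_mul_le_of_kelvin he ha has (n - 2) (hkelvin z ?_ _ (by positivity) ?_ _ ?_ ?_)
    · rw [mem_ball_zero_iff]; linarith
    · rw [Real.sqrt_lt' (by positivity)]; nlinarith
    · rw [mem_ball_zero_iff]
      calc ‖z + s • e‖ ≤ ‖z‖ + ‖s • e‖ := norm_add_le z (s • e)
        _ < 8 * a := by rw [norm_smul, he, Real.norm_of_nonneg hs.le]; linarith
    · rw [norm_add_smul_sub_self he hs.le, Real.sqrt_lt' hs]; nlinarith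
  have hdiff : DifferentiableAt ℝ u (z + a • e) := by
    rw [hzx]
    exact (hreg.contDiffAt (Metric.isOpen_ball.mem_nhds (by rw [mem_ball_zero_iff]; linarith))
      ).differentiableAt one_ne_zero
  have hkey := nonneg_mul_add_mul_fderiv_of_rpow_mul_le ha (by linarith) hdiff hray
  rw [hzx, ← inner_gradient_left, hgrad, Nat.cast_sub (by omega), Nat.cast_ofNat] at hkey
  rw [div_mul_eq_mul_div, le_div_iff₀ (by positivity)]
  linarith

/-- Calculus lemma (Lemma 2 in the paper): if a nonnegative `C¹` function `u` on the
ball `B_{8a}` satisfies the Kelvin-transform comparison `u_{x,λ} ≤ u` for all centers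
`x ∈ B_{4a}` and radii `0 < λ < 2a`, then `|∇u| ≤ (n-2)/(2a) · u` on `B_a`. -/
theorem calculus_lemma (n : ℕ) (hn : 3 ≤ n) (a : ℝ) (ha : 0 < a)
    (u : EuclideanSpace ℝ (Fin n) → ℝ)
    (hreg : ContDiffOn ℝ 1 u (Metric.ball (0 : EuclideanSpace ℝ (Fin n)) (8 * a)))
    (hnonneg : ∀ y ∈ Metric.ball (0 : EuclideanSpace ℝ (Fin n)) (8 * a), 0 ≤ u y)
    (hkelvin : ∀ x ∈ Metric.ball (0 : EuclideanSpace ℝ (Fin n)) (4 * a),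
      ∀ lam : ℝ, 0 < lam → lam < 2 * a →
      ∀ y ∈ Metric.ball (0 : EuclideanSpace ℝ (Fin n)) (8 * a), lam < ‖y - x‖ →
        (lam / ‖y - x‖) ^ (n - 2) * u (x + (lam ^ 2 / ‖y - x‖ ^ 2) • (y - x)) ≤ u y) :
    ∀ x : EuclideanSpace ℝ (Fin n), ‖x‖ < a →
      ‖gradient u x‖ ≤ ((n : ℝ) - 2) / (2 * a) * u x :=
  calculus_lemma_general n hn a ha u hreg hkelvin
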